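/- Let d ≥ 2 be an integer, 1 < α < 2, 0 < γ ≤ 2, and β > αγ/2. There exists a constant K' > 0, depending only on d, α, γ, β, such that for every nonnegative f ∈ C_c(ℝ^{d+1}) and every ρ > 0, ∫∫_{{(s,y) : s ≥ ρ^α, |y| ≤ s^{1/α}}} s^{γ/2 − d/α − 1} f(s,y) dy ds ≤ K' ρ^{αγ/2 − β} M_β f(0,0). -/

import Mathlib

open MeasureTheory ENNReal Set Filter

noncomputable section

/-- The spatial space `ℝ^d`. -/
abbrev Spc (d : ℕ) := EuclideanSpace ℝ (Fin d)

/-- Parabolic cylinder `C_ρ(t,x) = {(s,y) : t ≤ s ≤ t + ρ^α, |y - x| ≤ ρ}`. -/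
def cylP (d : ℕ) (α ρ t : ℝ) (x : Spc d) : Set (ℝ × Spc d) :=
  {p | t ≤ p.1 ∧ p.1 ≤ t + ρ ^ α ∧ dist p.2 x ≤ ρ}

/-- Average of `f` over the parabolic cylinder `C_ρ(t,x)`. -/
def cylAvg (d : ℕ) (α ρ t : ℝ) (x : Spc d) (f : ℝ × Spc d → ℝ≥0∞) : ℝ≥0∞ :=
  (volume (cylP d α ρ t x))⁻¹ * ∫⁻ p in cylP d α ρ t x, f p

/-- Parabolic Morrey norm `‖v‖_{E_q}`. -/
def morreyE (d : ℕ) (α q : ℝ) (v : ℝ × Spc d → ℝ≥0∞) : ℝ≥0∞ :=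
  ⨆ (ρ : ℝ) (_ : 0 < ρ) (t : ℝ) (x : Spc d),
    ENNReal.ofReal ρ * (cylAvg d α ρ t x (fun p => v p ^ q)) ^ (1 / q)

/-- Elliptic Morrey norm `‖w‖_{M_q}` on `ℝ^d`. -/
def morreyM (d : ℕ) (q : ℝ) (w : Spc d → ℝ≥0∞) : ℝ≥0∞ :=
  ⨆ (ρ : ℝ) (_ : 0 < ρ) (x : Spc d),
    ENNReal.ofReal ρ *
      ((volume (Metric.closedBall x ρ))⁻¹ *
        ∫⁻ y in Metric.closedBall x ρ, w y ^ q) ^ (1 / q)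

/-- Fractional (parabolic) maximal function `M_β f(t,x)`. -/
def maxFun (d : ℕ) (α β : ℝ) (f : ℝ × Spc d → ℝ≥0∞) (t : ℝ) (x : Spc d) : ℝ≥0∞ :=
  ⨆ (ρ : ℝ) (_ : 0 < ρ), ENNReal.ofReal (ρ ^ β) * cylAvg d α ρ t x f

/-- Uncentered parabolic maximal function `M̂ f(z)`, sup over all parabolic
cylinders containing `z`. -/
def hatM (d : ℕ) (α : ℝ) (f : ℝ × Spc d → ℝ≥0∞) (z : ℝ × Spc d) : ℝ≥0∞ :=
  ⨆ (ρ : ℝ) (_ : 0 < ρ) (t : ℝ) (x : Spc d) (_ : z ∈ cylP d α ρ t x),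
    cylAvg d α ρ t x f

/-- The kernel `p_γ(s,y) = 1_{s>0} s^{γ/2} min(|y|^{-d-α}, s^{-(d+α)/α})`. -/
def pKer (d : ℕ) (α γ : ℝ) (s : ℝ) (y : Spc d) : ℝ≥0∞ :=
  if 0 < s then
    (if s ^ (1 / α) ≤ ‖y‖ then ENNReal.ofReal (s ^ (γ / 2) * ‖y‖ ^ (-(d : ℝ) - α))
     else ENNReal.ofReal (s ^ (γ / 2 - ((d : ℝ) + α) / α)))
  else 0

/-- `P_γ f(t,x) = ∫ p_γ(s,y) f(t+s, x+y) dy ds`. -/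
def Pop (d : ℕ) (α γ : ℝ) (f : ℝ × Spc d → ℝ≥0∞) (t : ℝ) (x : Spc d) : ℝ≥0∞ :=
  ∫⁻ p : ℝ × Spc d, pKer d α γ p.1 p.2 * f (t + p.1, x + p.2)

/-- `P*_γ f(t,x) = ∫ p_γ(s,y) f(t-s, x+y) dy ds`. -/
def PopStar (d : ℕ) (α γ : ℝ) (f : ℝ × Spc d → ℝ≥0∞) (t : ℝ) (x : Spc d) : ℝ≥0∞ :=
  ∫⁻ p : ℝ × Spc d, pKer d α γ p.1 p.2 * f (t - p.1, x + p.2)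


/-!
Write the weight as a superposition of cut-offs, `s^{-a} = a ∫_s^∞ u^{-a-1} du` with
`a = d/α + 1 - γ/2`, and exchange the order of integration. For `u > ρ^α` the part of the region
with `s < u` lies in the cylinder `C_r(0,0)`, `r = u^{1/α}`, on which the integral of `f` is at most
`|C_r| r^{-β} M_β f(0,0) = |B_1| u^{(α+d-β)/α} M_β f(0,0)`. What is left is
`∫_{ρ^α}^∞ u^{γ/2-β/α-1} du = ρ^{αγ/2-β} / (β/α - γ/2)`, finite because `β > αγ/2`.
-/

lemma lintegral_Ioi_ofReal_rpow {c e : ℝ} (hc : 0 < c) (he : e < -1) :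
    ∫⁻ u in Ioi c, ENNReal.ofReal (u ^ e) = ENNReal.ofReal (c ^ (e + 1) / -(e + 1)) := by
  rw [← ofReal_integral_eq_lintegral_ofReal (integrableOn_Ioi_rpow_of_lt he hc)
    ((ae_restrict_iff' measurableSet_Ioi).2 <| ae_of_all _ fun u hu =>
      Real.rpow_nonneg (hc.trans hu).le e), integral_Ioi_rpow_of_lt he hc, neg_div, div_neg]

lemma ofReal_rpow_neg_eq_mul_lintegral_Ioi {a s : ℝ} (ha : 0 < a) (hs : 0 < s) :
    ENNReal.ofReal (s ^ (-a)) =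
      ENNReal.ofReal a * ∫⁻ u in Ioi s, ENNReal.ofReal (u ^ (-a - 1)) := by
  rw [lintegral_Ioi_ofReal_rpow hs (by linarith), ← ENNReal.ofReal_mul ha.le]
  congr 1
  rw [sub_add_cancel, neg_neg]
  field_simp

lemma lintegral_mul_lintegral_Ioi {X : Type*} [MeasurableSpace X] {μ : Measure X} [SFinite μ]
    {φ : X → ℝ} (hφ : Measurable φ) {g : X → ℝ≥0∞} (hg : Measurable g)
    {h : ℝ → ℝ≥0∞} (hh : Measurable h) :
    ∫⁻ x, g x * (∫⁻ u in Ioi (φ x), h u) ∂μ = ∫⁻ u, h u * ∫⁻ x in {x | φ x < u}, g x ∂μ := by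
  set F : X → ℝ → ℝ≥0∞ := fun x u => {p : X × ℝ | φ p.1 < p.2}.indicator
    (fun p => g p.1 * h p.2) (x, u)
  have hF : Measurable (Function.uncurry F) :=
    ((hg.comp measurable_fst).mul (hh.comp measurable_snd)).indicator
      (measurableSet_lt (hφ.comp measurable_fst) measurable_snd)
  calc ∫⁻ x, g x * (∫⁻ u in Ioi (φ x), h u) ∂μ = ∫⁻ x, (∫⁻ u, F x u) ∂μ := by
        congr 1 with x
        rw [← lintegral_const_mul _ hh, ← lintegral_indicator measurableSet_Ioi]
        rfl
    _ = ∫⁻ u, ∫⁻ x, F x u ∂μ := lintegral_lintegral_swap hF.aemeasurable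
    _ = ∫⁻ u, h u * ∫⁻ x in {x | φ x < u}, g x ∂μ := by
        congr 1 with u
        rw [← lintegral_const_mul _ hg,
          ← lintegral_indicator (measurableSet_lt hφ measurable_const)]
        simp only [F, indicator_apply, mem_ofPred_eq, mul_comm]

lemma cylP_eq_prod (d : ℕ) (α ρ t : ℝ) (x : Spc d) :
    cylP d α ρ t x = Icc t (t + ρ ^ α) ×ˢ Metric.closedBall x ρ := by
  ext p
  simp [cylP, and_assoc]

lemma volume_cylP (d : ℕ) (α t : ℝ) (x : Spc d) {ρ : ℝ} (hρ : 0 ≤ ρ) :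
    volume (cylP d α ρ t x) =
      ENNReal.ofReal (ρ ^ α * ρ ^ d) * volume (Metric.ball (0 : Spc d) 1) := by
  rw [cylP_eq_prod, Measure.volume_eq_prod, Measure.prod_prod, Real.volume_Icc,
    Measure.addHaar_closedBall _ _ hρ, finrank_euclideanSpace_fin, add_sub_cancel_left,
    ENNReal.ofReal_mul (Real.rpow_nonneg hρ α), mul_assoc]

lemma setLIntegral_cylP_le_maxFun (d : ℕ) (α β t : ℝ) (x : Spc d) (f : ℝ × Spc d → ℝ≥0∞)
    {ρ : ℝ} (hρ : 0 < ρ) :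
    ∫⁻ z in cylP d α ρ t x, f z ≤
      ENNReal.ofReal (ρ ^ (α + d - β)) * volume (Metric.ball (0 : Spc d) 1) *
        maxFun d α β f t x := by
  have hV : volume (cylP d α ρ t x) ≠ 0 := by
    rw [volume_cylP d α t x hρ.le]
    exact mul_ne_zero (ENNReal.ofReal_pos.2 (by positivity)).ne'
      (Metric.measure_ball_pos volume 0 one_pos).ne'
  have hV' : volume (cylP d α ρ t x) ≠ ∞ := by
    rw [volume_cylP d α t x hρ.le]
    exact ENNReal.mul_ne_top ENNReal.ofReal_ne_top measure_ball_lt_top.ne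
  have havg : ENNReal.ofReal (ρ ^ β) * cylAvg d α ρ t x f ≤ maxFun d α β f t x :=
    le_iSup₂ (f := fun ρ (_ : 0 < ρ) => ENNReal.ofReal (ρ ^ β) * cylAvg d α ρ t x f) ρ hρ
  have hexp : ρ ^ α * ρ ^ d = ρ ^ (α + d - β) * ρ ^ β := by
    rw [← Real.rpow_natCast, ← Real.rpow_add hρ, ← Real.rpow_add hρ, sub_add_cancel]
  calc ∫⁻ z in cylP d α ρ t x, f z = volume (cylP d α ρ t x) * cylAvg d α ρ t x f := by
        rw [cylAvg, ← mul_assoc, ENNReal.mul_inv_cancel hV hV', one_mul]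
    _ = ENNReal.ofReal (ρ ^ (α + d - β)) * volume (Metric.ball (0 : Spc d) 1) *
          (ENNReal.ofReal (ρ ^ β) * cylAvg d α ρ t x f) := by
        rw [volume_cylP d α t x hρ.le, hexp, ENNReal.ofReal_mul (by positivity)]
        ring
    _ ≤ _ := by gcongr

def farRegion (d : ℕ) (α ρ : ℝ) : Set (ℝ × Spc d) :=
  {z | ρ ^ α ≤ z.1 ∧ ‖z.2‖ ≤ z.1 ^ (1 / α)}

lemma measurableSet_farRegion (d : ℕ) (α ρ : ℝ) : MeasurableSet (farRegion d α ρ) :=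
  (measurableSet_le measurable_const measurable_fst).inter
    (measurableSet_le measurable_snd.norm (measurable_fst.pow_const _))

lemma lt_inter_farRegion_subset_cylP (d : ℕ) {α ρ u : ℝ} (hα : 0 < α) (hρ : 0 ≤ ρ) :
    {z : ℝ × Spc d | z.1 < u} ∩ farRegion d α ρ ⊆ cylP d α (u ^ (1 / α)) 0 0 := by
  rintro z ⟨hzu, hρz, hz⟩
  have hz0 : 0 ≤ z.1 := (Real.rpow_nonneg hρ α).trans hρz
  have hu0 : 0 ≤ u := hz0.trans hzu.le
  refine ⟨hz0, ?_, ?_⟩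
  · rw [zero_add, one_div, Real.rpow_inv_rpow hu0 hα.ne']
    exact hzu.le
  · rw [dist_zero_right]
    exact hz.trans (Real.rpow_le_rpow hz0 hzu.le (by positivity))

lemma lt_inter_farRegion_eq_empty (d : ℕ) {α ρ u : ℝ} (hu : u ≤ ρ ^ α) :
    {z : ℝ × Spc d | z.1 < u} ∩ farRegion d α ρ = ∅ :=
  eq_empty_of_forall_notMem fun _ ⟨hzu, hρz, _⟩ => (hzu.trans_le hu).not_ge hρz

lemma setLIntegral_lt_inter_farRegion_le (d : ℕ) {α ρ u : ℝ} (β : ℝ) (hα : 0 < α)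
    (hρ : 0 ≤ ρ) (hu : 0 < u) (g : ℝ × Spc d → ℝ≥0∞) :
    ∫⁻ z in {z : ℝ × Spc d | z.1 < u} ∩ farRegion d α ρ, g z ≤
      ENNReal.ofReal (u ^ ((α + d - β) / α)) * volume (Metric.ball (0 : Spc d) 1) *
        maxFun d α β g 0 0 := by
  have hexp : (u ^ (1 / α)) ^ (α + d - β) = u ^ ((α + d - β) / α) := by
    rw [← Real.rpow_mul hu.le, one_div_mul_eq_div]
  rw [← hexp]
  exact (lintegral_mono_set (lt_inter_farRegion_subset_cylP d hα hρ)).trans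
    (setLIntegral_cylP_le_maxFun d α β 0 0 g (Real.rpow_pos_of_pos hu _))

lemma lintegral_farRegion_rpow_neg_mul_eq (d : ℕ) {α ρ a : ℝ} (hρ : 0 < ρ) (ha : 0 < a)
    {g : ℝ × Spc d → ℝ≥0∞} (hg : Measurable g) :
    ∫⁻ z in farRegion d α ρ, ENNReal.ofReal (z.1 ^ (-a)) * g z =
      ENNReal.ofReal a * ∫⁻ u in Ioi (ρ ^ α), ENNReal.ofReal (u ^ (-a - 1)) *
        ∫⁻ z in {z : ℝ × Spc d | z.1 < u} ∩ farRegion d α ρ, g z := by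
  have hρα : 0 < ρ ^ α := Real.rpow_pos_of_pos hρ α
  calc ∫⁻ z in farRegion d α ρ, ENNReal.ofReal (z.1 ^ (-a)) * g z
      = ENNReal.ofReal a * ∫⁻ z in farRegion d α ρ,
          g z * ∫⁻ u in Ioi z.1, ENNReal.ofReal (u ^ (-a - 1)) := by
        rw [← lintegral_const_mul' _ _ ENNReal.ofReal_ne_top]
        refine setLIntegral_congr_fun (measurableSet_farRegion d α ρ) fun z hz => ?_
        rw [ofReal_rpow_neg_eq_mul_lintegral_Ioi ha (hρα.trans_le hz.1)]
        ring
    _ = ENNReal.ofReal a * ∫⁻ u, ENNReal.ofReal (u ^ (-a - 1)) *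
          ∫⁻ z in {z : ℝ × Spc d | z.1 < u} ∩ farRegion d α ρ, g z := by
        rw [lintegral_mul_lintegral_Ioi measurable_fst hg (by fun_prop)]
        congr 2 with u
        rw [Measure.restrict_restrict (measurableSet_lt measurable_fst measurable_const)]
    _ = _ := by
        rw [setLIntegral_eq_of_support_subset (Function.support_subset_iff'.2 fun u hu => ?_)]
        rw [lt_inter_farRegion_eq_empty d (not_lt.1 hu), Measure.restrict_empty,
          lintegral_zero_measure, mul_zero]

lemma weight_exponent_pos {d : ℕ} {α γ : ℝ} (hd : 0 < d) (hα : 0 < α) (hγ : γ ≤ 2) :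
    0 < d / α + 1 - γ / 2 := by
  have : (0 : ℝ) < d / α := by positivity
  linarith

lemma decay_exponent_pos {α γ β : ℝ} (hα : 0 < α) (hβ : α * γ / 2 < β) : 0 < β / α - γ / 2 := by
  rw [sub_pos, lt_div_iff₀ hα]
  linarith

theorem lintegral_farRegion_le {d : ℕ} {α γ β ρ : ℝ} (hd : 0 < d) (hα : 0 < α) (hγ : γ ≤ 2)
    (hβ : α * γ / 2 < β) (hρ : 0 < ρ) {g : ℝ × Spc d → ℝ≥0∞} (hg : Measurable g) :
    ∫⁻ z in farRegion d α ρ, ENNReal.ofReal (z.1 ^ (γ / 2 - d / α - 1)) * g z ≤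
      ENNReal.ofReal ((d / α + 1 - γ / 2) / (β / α - γ / 2) *
          (volume (Metric.ball (0 : Spc d) 1)).toReal * ρ ^ (α * γ / 2 - β)) *
        maxFun d α β g 0 0 := by
  set a : ℝ := d / α + 1 - γ / 2 with ha_def
  set b : ℝ := β / α - γ / 2 with hb_def
  have ha : 0 < a := weight_exponent_pos hd hα hγ
  have hb : 0 < b := decay_exponent_pos hα hβ
  set V := volume (Metric.ball (0 : Spc d) 1)
  set M := maxFun d α β g 0 0
  have hρα : 0 < ρ ^ α := Real.rpow_pos_of_pos hρ α
  have hinner (u : ℝ) (hu : u ∈ Ioi (ρ ^ α)) :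
      ENNReal.ofReal (u ^ (-a - 1)) *
          ∫⁻ z in {z : ℝ × Spc d | z.1 < u} ∩ farRegion d α ρ, g z ≤
        ENNReal.ofReal (u ^ (-b - 1)) * (V * M) := by
    have hu0 : 0 < u := hρα.trans hu
    calc _ ≤ ENNReal.ofReal (u ^ (-a - 1)) * (ENNReal.ofReal (u ^ ((α + d - β) / α)) * V * M) :=
          mul_le_mul_right (setLIntegral_lt_inter_farRegion_le d β hα hρ.le hu0 g) _
      _ = ENNReal.ofReal (u ^ (-a - 1) * u ^ ((α + d - β) / α)) * (V * M) := by
          rw [ENNReal.ofReal_mul (by positivity)]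
          ring
      _ = _ := by
          rw [← Real.rpow_add hu0, ha_def, hb_def]
          congr 3
          field_simp
          ring
  calc ∫⁻ z in farRegion d α ρ, ENNReal.ofReal (z.1 ^ (γ / 2 - d / α - 1)) * g z
      = ENNReal.ofReal a * ∫⁻ u in Ioi (ρ ^ α), ENNReal.ofReal (u ^ (-a - 1)) *
          ∫⁻ z in {z : ℝ × Spc d | z.1 < u} ∩ farRegion d α ρ, g z := by
        rw [← lintegral_farRegion_rpow_neg_mul_eq d hρ ha hg, ha_def]
        ring_nf
    _ ≤ ENNReal.ofReal a * ∫⁻ u in Ioi (ρ ^ α), ENNReal.ofReal (u ^ (-b - 1)) * (V * M) :=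
        mul_le_mul_right (setLIntegral_mono' measurableSet_Ioi hinner) _
    _ = _ := by
        rw [lintegral_mul_const _ (by fun_prop),
          lintegral_Ioi_ofReal_rpow hρα (by linarith), sub_add_cancel, neg_neg,
          ← Real.rpow_mul hρ.le, show α * -b = α * γ / 2 - β by rw [hb_def]; field_simp; ring,
          show a / b * V.toReal * ρ ^ (α * γ / 2 - β) = a * (ρ ^ (α * γ / 2 - β) / b) * V.toReal
            by ring, ENNReal.ofReal_mul (by positivity), ENNReal.ofReal_mul ha.le,
          ENNReal.ofReal_toReal measure_ball_lt_top.ne]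
        ring

theorem stmt_7_general (d : ℕ) (hd : 2 ≤ d) (α γ β : ℝ) (hα1 : 1 < α)
    (hγ2 : γ ≤ 2) (hβ : α * γ / 2 < β) :
    ∃ K' : ℝ, 0 < K' ∧
      ∀ (f : ℝ × Spc d → ℝ), Continuous f → HasCompactSupport f → (∀ z, 0 ≤ f z) →
      ∀ (ρ : ℝ), 0 < ρ →
      (∫⁻ z in {z : ℝ × Spc d | ρ ^ α ≤ z.1 ∧ ‖z.2‖ ≤ z.1 ^ (1 / α)},
          ENNReal.ofReal (z.1 ^ (γ / 2 - d / α - 1) * f z)) ≤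
        ENNReal.ofReal (K' * ρ ^ (α * γ / 2 - β)) *
          maxFun d α β (fun z => ENNReal.ofReal (f z)) 0 0 := by
  have hd0 : 0 < d := by omega
  have hα : 0 < α := zero_lt_one.trans hα1
  refine ⟨(d / α + 1 - γ / 2) / (β / α - γ / 2) * (volume (Metric.ball (0 : Spc d) 1)).toReal,
    mul_pos (div_pos (weight_exponent_pos hd0 hα hγ2) (decay_exponent_pos hα hβ))
      (ENNReal.toReal_pos (Metric.measure_ball_pos volume 0 one_pos).ne' measure_ball_lt_top.ne),
    fun f hf _ hf0 ρ hρ => ?_⟩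
  simp_rw [ENNReal.ofReal_mul' (hf0 _)]
  exact lintegral_farRegion_le hd0 hα hγ2 hβ hρ hf.measurable.ennreal_ofReal

/-- far-field estimate over the region `Q^c ∩ C_ρ(0,0)^c`, where
`Q^c = {(s,y) : |y| < s^{1/α}}`:
`∫∫_{s ≥ ρ^α, |y| ≤ s^{1/α}} s^{γ/2-d/α-1} f(s,y) dy ds ≤ K' ρ^{αγ/2-β} M_β f(0,0)`. -/
theorem stmt_7 (d : ℕ) (hd : 2 ≤ d) (α γ β : ℝ) (hα1 : 1 < α) (hα2 : α < 2)
    (hγ1 : 0 < γ) (hγ2 : γ ≤ 2) (hβ : α * γ / 2 < β) :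
    ∃ K' : ℝ, 0 < K' ∧
      ∀ (f : ℝ × Spc d → ℝ), Continuous f → HasCompactSupport f → (∀ z, 0 ≤ f z) →
      ∀ (ρ : ℝ), 0 < ρ →
      (∫⁻ z in {z : ℝ × Spc d | ρ ^ α ≤ z.1 ∧ ‖z.2‖ ≤ z.1 ^ (1 / α)},
          ENNReal.ofReal (z.1 ^ (γ / 2 - d / α - 1) * f z)) ≤
        ENNReal.ofReal (K' * ρ ^ (α * γ / 2 - β)) *
          maxFun d α β (fun z => ENNReal.ofReal (f z)) 0 0 :=
  stmt_7_general d hd α γ β hα1 hγ2 hβ
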